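/- Deterministic version of Lemma 1: Let V₁ be symmetric positive definite on ℝᵖ, B a q×p matrix, and V₁₂ = V₁ Bᵀ. For nonempty K ⊆ {1,…,p}, ‖V₁₂ − V₁ Π_K V₁₂‖ = 0 if and only if b_{•j} = 0 for all j ∉ K. -/

import Mathlib

open Matrix

attribute [local instance] Matrix.frobeniusNormedAddCommGroup

/-- The coordinate-restriction map `A_K : ℝᵖ → ℝ^{|K|}` as a matrix. -/
noncomputable def AK (p : ℕ) (K : Finset (Fin p)) : Matrix {i // i ∈ K} (Fin p) ℝ :=
  fun k j => if (k : Fin p) = j then 1 else 0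

/-- `Π_K := A_K* (A_K V A_K*)⁻¹ A_K`. -/
noncomputable def PiK (p : ℕ) (K : Finset (Fin p)) (V : Matrix (Fin p) (Fin p) ℝ) :
    Matrix (Fin p) (Fin p) ℝ :=
  (AK p K)ᵀ * (AK p K * V * (AK p K)ᵀ)⁻¹ * (AK p K)

/-!
`A_K A_Kᵀ = 1`, so `M := A_K V A_Kᵀ` is positive definite and `Π_K V A_Kᵀ = A_Kᵀ M⁻¹ M = A_Kᵀ`:
`Π_K V` fixes every matrix whose rows outside `K` vanish. Conversely, the range of
`Π_K = A_Kᵀ (…)` consists of such matrices. Hence `V₁ Π_K V₁ Bᵀ = V₁ Bᵀ`, i.e. `Π_K V₁ Bᵀ = Bᵀ`,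
holds exactly when the columns of `B` outside `K` vanish.
-/

section Restriction

variable {p : ℕ} (K : Finset (Fin p)) {m : Type*}

lemma AK_mul_transpose_AK : AK p K * (AK p K)ᵀ = 1 := by
  ext k l
  rw [mul_apply, Fintype.sum_eq_single (k : Fin p) fun j hj => by simp [AK, Ne.symm hj]]
  simp only [AK, transpose_apply, if_pos, one_mul, one_apply, ← Subtype.ext_iff]
  by_cases h : k = l
  · simp [h]
  · simp [h, Ne.symm h]

lemma transpose_AK_mul_apply_of_notMem (Y : Matrix {i // i ∈ K} m ℝ) {j : Fin p} (hj : j ∉ K)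
    (c : m) : ((AK p K)ᵀ * Y) j c = 0 := by
  refine Finset.sum_eq_zero fun k _ => ?_
  have hkj : (k : Fin p) ≠ j := fun h => hj (h ▸ k.2)
  simp [AK, hkj]

lemma transpose_AK_mul_AK_mul_of_forall_notMem (X : Matrix (Fin p) m ℝ)
    (hX : ∀ j ∉ K, ∀ c, X j c = 0) : (AK p K)ᵀ * (AK p K * X) = X := by
  ext j c
  by_cases hj : j ∈ K
  · rw [mul_apply, Fintype.sum_eq_single ⟨j, hj⟩]
    · simp [AK, mul_apply]
    · intro k hk
      have hkj : (k : Fin p) ≠ j := fun h => hk (Subtype.ext h)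
      simp [AK, hkj]
  · rw [transpose_AK_mul_apply_of_notMem K _ hj, hX j hj]

variable {K} {V : Matrix (Fin p) (Fin p) ℝ}

lemma posDef_AK_mul_mul_transpose_AK (hV : V.PosDef) : (AK p K * V * (AK p K)ᵀ).PosDef := by
  have hinj : Function.Injective (AK p K).vecMul := by
    refine Function.LeftInverse.injective (g := fun y => y ᵥ* (AK p K)ᵀ) fun x => ?_
    simp only [vecMul_vecMul, AK_mul_transpose_AK, vecMul_one]
  simpa [conjTranspose_eq_transpose_of_trivial] using hV.mul_mul_conjTranspose_same hinj

lemma PiK_mul_mul_transpose_AK (hV : V.PosDef) : PiK p K V * V * (AK p K)ᵀ = (AK p K)ᵀ := by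
  have hM : IsUnit (AK p K * V * (AK p K)ᵀ).det :=
    (isUnit_iff_isUnit_det _).mp (posDef_AK_mul_mul_transpose_AK hV).isUnit
  calc PiK p K V * V * (AK p K)ᵀ
      = (AK p K)ᵀ * ((AK p K * V * (AK p K)ᵀ)⁻¹ * (AK p K * V * (AK p K)ᵀ)) := by
        simp only [PiK, Matrix.mul_assoc]
    _ = (AK p K)ᵀ := by rw [nonsing_inv_mul _ hM, Matrix.mul_one]

theorem PiK_mul_mul_eq_self_iff (hV : V.PosDef) (X : Matrix (Fin p) m ℝ) :
    PiK p K V * V * X = X ↔ ∀ j ∉ K, ∀ c, X j c = 0 := by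
  constructor
  · intro hX j hj c
    rw [← hX, PiK, Matrix.mul_assoc, Matrix.mul_assoc, Matrix.mul_assoc,
      transpose_AK_mul_apply_of_notMem K _ hj]
  · intro hX
    rw [← transpose_AK_mul_AK_mul_of_forall_notMem K X hX, ← Matrix.mul_assoc,
      PiK_mul_mul_transpose_AK hV]

end Restriction

theorem stmt5_general {p q : ℕ} (K : Finset (Fin p))
    (V₁ : Matrix (Fin p) (Fin p) ℝ) (hV₁ : V₁.PosDef)
    (B : Matrix (Fin q) (Fin p) ℝ)
    (V₁₂ : Matrix (Fin p) (Fin q) ℝ) (hV₁₂ : V₁₂ = V₁ * Bᵀ) :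
    ‖V₁₂ - V₁ * PiK p K V₁ * V₁₂‖ = 0 ↔
      ∀ j ∉ K, (fun i => B i j) = 0 := by
  have := hV₁.isUnit.invertible
  rw [norm_eq_zero, sub_eq_zero, hV₁₂, Matrix.mul_assoc, Matrix.mul_right_inj_of_invertible, eq_comm, ← Matrix.mul_assoc, PiK_mul_mul_eq_self_iff hV₁]
  simp [funext_iff]

theorem stmt5 {p q : ℕ} (K : Finset (Fin p)) (hK : K.Nonempty)
    (V₁ : Matrix (Fin p) (Fin p) ℝ) (hV₁ : V₁.PosDef)
    (B : Matrix (Fin q) (Fin p) ℝ)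
    (V₁₂ : Matrix (Fin p) (Fin q) ℝ) (hV₁₂ : V₁₂ = V₁ * Bᵀ) :
    ‖V₁₂ - V₁ * PiK p K V₁ * V₁₂‖ = 0 ↔
      ∀ j ∉ K, (fun i => B i j) = 0 :=
  stmt5_general K V₁ hV₁ B V₁₂ hV₁₂
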